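/- arXiv:2010.01286 — 5 statements merged into one kernel-verified Lean document; each statement's English description precedes it below -/
import Mathlib

section
/- For every d ≥ 2 and every n ≥ 1, there exist n points in ℝ^d such that for every pair 1 ≤ i < j ≤ d, the projections of these points onto the (i,j)-coordinate plane are n distinct points in strictly convex position. -/
/-- A straight-line drawing of `G` with vertex `v` at `p v` is crossing-free:
vertices are at distinct points and any two distinct edge segments meet only
at common endpoints. -/
def CrossingFree {V : Type*} (G : SimpleGraph V) (p : V → ℝ × ℝ) : Prop :=
  Function.Injective p ∧
  ∀ u v w x : V, G.Adj u v → G.Adj w x → ({u, v} : Set V) ≠ {w, x} →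
    segment ℝ (p u) (p v) ∩ segment ℝ (p w) (p x) ⊆
      ({p u, p v} : Set (ℝ × ℝ)) ∩ {p w, p x}

/-- A plane-projecting map of `G` in `ℝ^d`. -/
def IsPlaneProjecting {V : Type*} (G : SimpleGraph V) (d : ℕ)
    (ρ : V → Fin d → ℝ) (E : Fin d → Fin d → SimpleGraph V) : Prop :=
  Function.Injective ρ ∧
  (G = ⨆ (i : Fin d) (j : Fin d) (_ : i < j), E i j) ∧
  ∀ i j : Fin d, i < j → CrossingFree (E i j) (fun v => (ρ v i, ρ v j))

/-- The plane-projecting dimension. -/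
noncomputable def pdim {V : Type*} (G : SimpleGraph V) : ℕ :=
  sInf {d : ℕ | ∃ (ρ : V → Fin d → ℝ) (E : Fin d → Fin d → SimpleGraph V),
    IsPlaneProjecting G d ρ E}

/-- `G` decomposes into `k` planar subgraphs. -/
def ThicknessLE {V : Type*} (G : SimpleGraph V) (k : ℕ) : Prop :=
  ∃ f : Fin k → SimpleGraph V, (G = ⨆ i, f i) ∧
    ∀ i, ∃ p : V → ℝ × ℝ, CrossingFree (f i) p

noncomputable def thickness {V : Type*} (G : SimpleGraph V) : ℕ :=
  sInf {k | ThicknessLE G k}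

/-- A linear forest: acyclic with maximum degree at most 2. -/
def IsLinearForest {V : Type*} (G : SimpleGraph V) : Prop :=
  G.IsAcyclic ∧ ∀ v : V, (G.neighborSet v).ncard ≤ 2

/-- A caterpillar tree: a tree with a central path (spine) such that every
vertex is on the spine or adjacent to a spine vertex. -/
def IsCaterpillar {V : Type*} (G : SimpleGraph V) : Prop :=
  G.Connected ∧ G.IsAcyclic ∧
  ∃ (k : ℕ) (w : Fin k → V), Function.Injective w ∧
    (∀ a b : Fin k, (a : ℕ) + 1 = (b : ℕ) → G.Adj (w a) (w b)) ∧
    (∀ v : V, v ∈ Set.range w ∨ ∃ a : Fin k, G.Adj v (w a))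

/-- A caterpillar forest: every connected component is a caterpillar. -/
def IsCaterpillarForest {V : Type*} (G : SimpleGraph V) : Prop :=
  ∀ c : G.ConnectedComponent, IsCaterpillar (G.induce c.supp)

/-- A subgraph that is a path. -/
def IsPathSubgraph {V : Type*} (P : SimpleGraph V) : Prop :=
  ∃ (k : ℕ) (w : Fin k → V), Function.Injective w ∧
    ∀ u v : V, P.Adj u v ↔ ∃ a b : Fin k, u = w a ∧ v = w b ∧
      ((a : ℕ) + 1 = (b : ℕ) ∨ (b : ℕ) + 1 = (a : ℕ))


lemma graph_not_mem_convexHull {f : ℝ → ℝ} {s : Set ℝ} (hf : StrictConvexOn ℝ s f)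
    {n : ℕ} {x : Fin n → ℝ} (hxs : ∀ k, x k ∈ s) (hinj : Function.Injective x) (m : Fin n) :
    (x m, f (x m)) ∉ convexHull ℝ ((fun k => (x k, f (x k))) '' {k | k ≠ m}) := by
  classical
  intro hmem
  rw [_root_.convexHull_eq] at hmem
  obtain ⟨ι, t, w, z, hw, hw1, hz, hcm⟩ := hmem
  rw [Finset.centerMass_eq_of_sum_1 _ _ hw1] at hcm
  set t' : Finset ι := t.filter (fun i => 0 < w i) with ht'
  have hsub : t' ⊆ t := Finset.filter_subset _ _
  have hzero : ∀ i ∈ t, i ∉ t' → w i = 0 := by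
    intro i hi hni
    have : ¬ 0 < w i := by simpa [ht', hi] using hni
    linarith [hw i hi]
  have hw1' : ∑ i ∈ t', w i = 1 := by
    rw [← hw1]; exact Finset.sum_subset hsub (fun i hi hni => hzero i hi hni)
  have hcm' : (∑ i ∈ t', w i • z i) = (x m, f (x m)) := by
    rw [← hcm]; exact Finset.sum_subset hsub (fun i hi hni => by simp [hzero i hi hni])
  -- properties of each z i
  have hzi : ∀ i ∈ t', ∃ k : Fin n, k ≠ m ∧ z i = (x k, f (x k)) := by
    intro i hi
    obtain ⟨k, hk, hzk⟩ := hz i (hsub hi)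
    exact ⟨k, hk, hzk.symm⟩
  have hfst_mem : ∀ i ∈ t', (z i).1 ∈ s := by
    intro i hi; obtain ⟨k, _, hzk⟩ := hzi i hi; rw [hzk]; exact hxs k
  have hsnd : ∀ i ∈ t', (z i).2 = f ((z i).1) := by
    intro i hi; obtain ⟨k, _, hzk⟩ := hzi i hi; rw [hzk]
  have hne : ∀ i ∈ t', (z i).1 ≠ x m := by
    intro i hi; obtain ⟨k, hk, hzk⟩ := hzi i hi; rw [hzk]
    exact fun h => hk (hinj h)
  have h1 : (∑ i ∈ t', w i • (z i).1) = x m := by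
    have := congrArg Prod.fst hcm'
    simpa [Prod.fst_sum] using this
  have h2 : (∑ i ∈ t', w i • f ((z i).1)) = f (x m) := by
    have := congrArg Prod.snd hcm'
    simp only [Prod.snd_sum] at this
    rw [← show (∑ i ∈ t', (w i • z i).2) = f (x m) from this]
    exact Finset.sum_congr rfl (fun i hi => by rw [Prod.smul_snd, hsnd i hi])
  have hwp : ∀ i ∈ t', 0 < w i := fun i hi => (Finset.mem_filter.mp hi).2
  have hnc : ∃ j ∈ t', ∃ k ∈ t', (z j).1 ≠ (z k).1 := by
    by_contra hcon
    push_neg at hcon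
    have hne' : t'.Nonempty := Finset.nonempty_of_sum_ne_zero (by rw [hw1']; norm_num)
    obtain ⟨j0, hj0⟩ := hne'
    have : (∑ i ∈ t', w i • (z i).1) = (z j0).1 := by
      have : ∀ i ∈ t', w i • (z i).1 = w i • (z j0).1 := fun i hi => by
        rw [hcon i hi j0 hj0]
      rw [Finset.sum_congr rfl this, ← Finset.sum_smul, hw1', one_smul]
    exact hne j0 hj0 (this ▸ h1)
  have := hf.map_sum_lt hwp hw1' hfst_mem hnc
  rw [h1, h2] at this
  exact lt_irrefl _ this

/-- For every `d ≥ 2` and `n ≥ 1` there are `n` points in `ℝ^d` all of whose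
coordinate-plane projections are `n` distinct points in strictly convex position. -/
theorem statement3 (d n : ℕ) (hd : 2 ≤ d) (hn : 1 ≤ n) :
    ∃ P : Fin n → Fin d → ℝ, ∀ i j : Fin d, i < j →
      Function.Injective (fun m : Fin n => (P m i, P m j)) ∧
      ∀ m : Fin n, (P m i, P m j) ∉
        convexHull ℝ ((fun m' : Fin n => (P m' i, P m' j)) '' {m' | m' ≠ m}) := by
  classical
  set t : Fin n → ℝ := fun m => (m : ℝ) + 1 with ht
  have htpos : ∀ m, 0 < t m := fun m => by positivity
  have htinj : Function.Injective t := by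
    intro m1 m2 h
    have : ((m1 : ℕ) : ℝ) = ((m2 : ℕ) : ℝ) := by simpa [ht] using h
    exact Fin.ext (Nat.cast_injective this)
  refine ⟨fun m i => t m ^ ((i : ℕ) + 1), fun i j hij => ?_⟩
  set a : ℕ := (i : ℕ) + 1 with ha
  set b : ℕ := (j : ℕ) + 1 with hb
  have hab : a < b := by simpa [ha, hb] using Fin.lt_iff_val_lt_val.mp hij
  set p : ℝ := (b : ℝ) / (a : ℝ) with hp
  have hp1 : 1 < p := by
    rw [hp]
    rw [one_lt_div (by positivity)]
    exact_mod_cast hab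
  set x : Fin n → ℝ := fun m => t m ^ a with hx
  have hxinj : Function.Injective x := by
    intro m1 m2 h
    exact htinj ((pow_left_strictMonoOn₀ (n := a) (by omega)).injOn
      (le_of_lt (htpos m1)) (le_of_lt (htpos m2)) h)
  have hfx : ∀ m, (x m) ^ p = t m ^ b := by
    intro m
    rw [hx]
    simp only
    rw [← Real.rpow_natCast (t m) a, ← Real.rpow_natCast (t m) b,
      ← Real.rpow_mul (le_of_lt (htpos m))]
    congr 1
    rw [hp]
    have ha0 : (a : ℝ) ≠ 0 := Nat.cast_ne_zero.mpr (by omega)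
    field_simp
  have hxs : ∀ m, x m ∈ Set.Ici (0 : ℝ) := fun m => le_of_lt (pow_pos (htpos m) a)
  constructor
  · intro m1 m2 h
    have : x m1 = x m2 := congrArg Prod.fst h
    exact hxinj this
  · intro m
    have key := graph_not_mem_convexHull (strictConvexOn_rpow hp1) hxs hxinj m
    have heq : (fun k : Fin n => (x k, (x k) ^ p)) = fun m' : Fin n =>
        (t m' ^ a, t m' ^ b) := by
      funext k
      rw [hfx k]
    rw [heq, hfx m] at key
    exact key
end

section
/- Let G be a path graph on vertices v_1, …, v_n (n ≥ 2) and let y_1, …, y_n be arbitrary distinct real numbers. Then there exist real numbers x_1, …, x_n such that the straight-line drawing of G with v_i placed at (x_i, y_i) is crossing-free (no two edges intersect except at shared endpoints). -/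
section Statement5Aux

lemma seg_fst_mem {a b z : ℝ × ℝ} (h : z ∈ segment ℝ a b) :
    z.1 ∈ segment ℝ a.1 b.1 := by
  obtain ⟨s, t, hs, ht, hst, rfl⟩ := h
  exact ⟨s, t, hs, ht, hst, rfl⟩

lemma seg_eq_right {a b z : ℝ × ℝ} (h : z ∈ segment ℝ a b) (hab : a.1 < b.1)
    (hz : z.1 = b.1) : z = b := by
  obtain ⟨s, t, hs, ht, hst, rfl⟩ := h
  have h1 : s * a.1 + t * b.1 = b.1 := hz
  have h2 : s * (b.1 - a.1) = 0 := by linear_combination b.1 * hst - h1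
  have hs0 : s = 0 := by
    rcases mul_eq_zero.mp h2 with h | h
    · exact h
    · exact absurd h (sub_ne_zero.mpr hab.ne')
  have ht1 : t = 1 := by linarith
  subst hs0; subst ht1; simp

lemma seg_eq_left {a b z : ℝ × ℝ} (h : z ∈ segment ℝ a b) (hab : a.1 < b.1)
    (hz : z.1 = a.1) : z = a := by
  rw [segment_symm] at h
  obtain ⟨s, t, hs, ht, hst, rfl⟩ := h
  have h1 : s * b.1 + t * a.1 = a.1 := hz
  have h2 : s * (b.1 - a.1) = 0 := by linear_combination h1 - a.1 * hst
  have hs0 : s = 0 := by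
    rcases mul_eq_zero.mp h2 with h | h
    · exact h
    · exact absurd h (sub_ne_zero.mpr hab.ne')
  have ht1 : t = 1 := by linarith
  subst hs0; subst ht1; simp

lemma aux_ordered {n : ℕ} (y : Fin n → ℝ) (u v w x : Fin n)
    (huv : (u : ℕ) + 1 = (v : ℕ)) (hwx : (w : ℕ) + 1 = (x : ℕ))
    (hlt : (u : ℕ) < (w : ℕ)) (z : ℝ × ℝ)
    (hz1 : z ∈ segment ℝ (((u : ℕ) : ℝ), y u) (((v : ℕ) : ℝ), y v))
    (hz2 : z ∈ segment ℝ (((w : ℕ) : ℝ), y w) (((x : ℕ) : ℝ), y x)) :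
    z = (((v : ℕ) : ℝ), y v) ∧ z = (((w : ℕ) : ℝ), y w) := by
  have h1 := seg_fst_mem hz1
  have h2 := seg_fst_mem hz2
  have huv' : ((u : ℕ) : ℝ) < ((v : ℕ) : ℝ) := by
    exact_mod_cast (by omega : (u : ℕ) < (v : ℕ))
  have hwx' : ((w : ℕ) : ℝ) < ((x : ℕ) : ℝ) := by
    exact_mod_cast (by omega : (w : ℕ) < (x : ℕ))
  rw [segment_eq_Icc huv'.le] at h1
  rw [segment_eq_Icc hwx'.le] at h2
  have hvw : ((v : ℕ) : ℝ) ≤ ((w : ℕ) : ℝ) := by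
    exact_mod_cast (by omega : (v : ℕ) ≤ (w : ℕ))
  have hzv : z.1 = ((v : ℕ) : ℝ) := le_antisymm h1.2 (by linarith [h2.1])
  have hzw : z.1 = ((w : ℕ) : ℝ) := le_antisymm (by linarith [h1.2]) h2.1
  exact ⟨seg_eq_right hz1 huv' hzv, seg_eq_left hz2 hwx' hzw⟩

end Statement5Aux

/-- A path admits a crossing-free straight-line drawing with arbitrary
prescribed distinct `y`-coordinates. -/
theorem statement5 (n : ℕ) (hn : 2 ≤ n) (y : Fin n → ℝ)
    (hy : Function.Injective y) :
    ∃ x : Fin n → ℝ,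
      CrossingFree (SimpleGraph.pathGraph n) (fun i => (x i, y i)) := by
  refine ⟨fun i => ((i : ℕ) : ℝ), ?_, ?_⟩
  · intro i j h
    have h1 : (((i : ℕ) : ℝ)) = ((j : ℕ) : ℝ) := congrArg Prod.fst h
    exact Fin.ext (Nat.cast_injective h1)
  · intro u v w x huv hwx hne z hz
    obtain ⟨hz1, hz2⟩ := hz
    simp only [SimpleGraph.pathGraph_adj] at huv hwx
    -- orient the edges
    obtain ⟨u', v', huv', hset1, hseg1⟩ :
        ∃ u' v' : Fin n, (u' : ℕ) + 1 = (v' : ℕ) ∧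
          ({u, v} : Set (Fin n)) = {u', v'} ∧
          z ∈ segment ℝ (((u' : ℕ) : ℝ), y u') (((v' : ℕ) : ℝ), y v') := by
      rcases huv with h | h
      · exact ⟨u, v, h, rfl, hz1⟩
      · exact ⟨v, u, h, Set.pair_comm u v, by rw [segment_symm]; exact hz1⟩
    obtain ⟨w', x', hwx', hset2, hseg2⟩ :
        ∃ w' x' : Fin n, (w' : ℕ) + 1 = (x' : ℕ) ∧
          ({w, x} : Set (Fin n)) = {w', x'} ∧
          z ∈ segment ℝ (((w' : ℕ) : ℝ), y w') (((x' : ℕ) : ℝ), y x') := by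
      rcases hwx with h | h
      · exact ⟨w, x, h, rfl, hz2⟩
      · exact ⟨x, w, h, Set.pair_comm w x, by rw [segment_symm]; exact hz2⟩
    have hne' : u' ≠ w' := by
      rintro rfl
      apply hne
      rw [hset1, hset2]
      have : v' = x' := Fin.ext (by omega)
      rw [this]
    have key : z ∈ ({(((u' : ℕ) : ℝ), y u'), (((v' : ℕ) : ℝ), y v')} : Set (ℝ × ℝ)) ∧
        z ∈ ({(((w' : ℕ) : ℝ), y w'), (((x' : ℕ) : ℝ), y x')} : Set (ℝ × ℝ)) := by
      rcases lt_trichotomy (u' : ℕ) (w' : ℕ) with h | h | h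
      · obtain ⟨ha, hb⟩ := aux_ordered y u' v' w' x' huv' hwx' h z hseg1 hseg2
        exact ⟨Or.inr ha, Or.inl hb⟩
      · exact absurd (Fin.ext h) hne'
      · obtain ⟨ha, hb⟩ := aux_ordered y w' x' u' v' hwx' huv' h z hseg2 hseg1
        exact ⟨Or.inl hb, Or.inr ha⟩
    simp only [Set.mem_insert_iff, Set.mem_singleton_iff] at key
    have hu'm : u' = u ∨ u' = v := by
      have h : u' ∈ ({u, v} : Set (Fin n)) := by rw [hset1]; exact Set.mem_insert _ _
      simpa using h
    have hv'm : v' = u ∨ v' = v := by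
      have h : v' ∈ ({u, v} : Set (Fin n)) := by
        rw [hset1]; exact Set.mem_insert_of_mem _ rfl
      simpa using h
    have hw'm : w' = w ∨ w' = x := by
      have h : w' ∈ ({w, x} : Set (Fin n)) := by rw [hset2]; exact Set.mem_insert _ _
      simpa using h
    have hx'm : x' = w ∨ x' = x := by
      have h : x' ∈ ({w, x} : Set (Fin n)) := by
        rw [hset2]; exact Set.mem_insert_of_mem _ rfl
      simpa using h
    constructor
    · simp only [Set.mem_insert_iff, Set.mem_singleton_iff]
      rcases key.1 with h | h
      · rcases hu'm with rfl | rfl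
        · exact Or.inl h
        · exact Or.inr h
      · rcases hv'm with rfl | rfl
        · exact Or.inl h
        · exact Or.inr h
    · simp only [Set.mem_insert_iff, Set.mem_singleton_iff]
      rcases key.2 with h | h
      · rcases hw'm with rfl | rfl
        · exact Or.inl h
        · exact Or.inr h
      · rcases hx'm with rfl | rfl
        · exact Or.inl h
        · exact Or.inr h
end

section
/- Let G be a caterpillar tree on vertices v_1, …, v_n (n ≥ 2) and let y_1, …, y_n be arbitrary distinct real numbers. Then there exist real numbers x_1, …, x_n such that the straight-line drawing of G with v_i placed at (x_i, y_i) is crossing-free. -/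
private lemma seg_fst_le' {A B P : ℝ × ℝ} {r : ℝ} (hA : A.1 ≤ r) (hB : B.1 ≤ r)
    (h : P ∈ segment ℝ A B) : P.1 ≤ r := by
  obtain ⟨s, t, hs, ht, hst, hP⟩ := h
  have h1 : P.1 = s * A.1 + t * B.1 := by rw [← hP]; simp [smul_eq_mul]
  have hr : s * r + t * r = r := by rw [← add_mul, hst, one_mul]
  nlinarith [mul_le_mul_of_nonneg_left hA hs, mul_le_mul_of_nonneg_left hB ht]

private lemma seg_fst_lt' {A B P : ℝ × ℝ} {r : ℝ} (hA : r < A.1) (hB : r < B.1)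
    (h : P ∈ segment ℝ A B) : r < P.1 := by
  obtain ⟨s, t, hs, ht, hst, hP⟩ := h
  have h1 : P.1 = s * A.1 + t * B.1 := by rw [← hP]; simp [smul_eq_mul]
  rcases eq_or_lt_of_le hs with h0 | h0
  · have ht1 : t = 1 := by linarith
    have : P.1 = B.1 := by rw [h1, ← h0, ht1]; ring
    rw [this]; exact hB
  · have hr : s * r + t * r = r := by rw [← add_mul, hst, one_mul]
    nlinarith [mul_lt_mul_of_pos_left hA h0, mul_le_mul_of_nonneg_left hB.le ht]

private lemma seg_common' {A B C : ℝ × ℝ}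
    (h : ∀ s t : ℝ, 0 < s → 0 < t → s • (B - A) ≠ t • (C - A)) (hB : B ≠ A) :
    ∀ P : ℝ × ℝ, P ∈ segment ℝ A B → P ∈ segment ℝ A C → P = A := by
  intro P h1 h2
  rw [segment_eq_image' ℝ A B] at h1
  rw [segment_eq_image' ℝ A C] at h2
  obtain ⟨s, hs, hPs⟩ := h1
  obtain ⟨t, ht, hPt⟩ := h2
  rcases eq_or_lt_of_le hs.1 with h0 | h0
  · subst hPs
    rw [← h0]
    simp
  · exfalso
    have he : s • (B - A) = t • (C - A) := add_left_cancel (hPs.trans hPt.symm)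
    rcases eq_or_lt_of_le ht.1 with h0' | h0'
    · rw [← h0', zero_smul] at he
      rcases smul_eq_zero.mp he with h' | h'
      · exact absurd h' (ne_of_gt h0)
      · exact hB (sub_eq_zero.mp h')
    · exact h s t h0 h0' he

private lemma cross_imp' {u v : ℝ × ℝ} (h : u.1 * v.2 ≠ u.2 * v.1) {s t : ℝ}
    (hs : 0 < s) (ht : 0 < t) : s • u ≠ t • v := by
  intro he
  have h1 : s * u.1 = t * v.1 := by
    have := congrArg Prod.fst he; simpa [smul_eq_mul] using this
  have h2 : s * u.2 = t * v.2 := by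
    have := congrArg Prod.snd he; simpa [smul_eq_mul] using this
  apply h
  have h3 : s * (u.1 * v.2) = s * (u.2 * v.1) := by linear_combination v.2 * h1 - v.1 * h2
  exact mul_left_cancel₀ (ne_of_gt hs) h3

private lemma opp_imp' {u v : ℝ × ℝ} (hu : u.1 < 0) (hv : 0 < v.1) {s t : ℝ}
    (hs : 0 < s) (ht : 0 < t) : s • u ≠ t • v := by
  intro he
  have h1 : s * u.1 = t * v.1 := by
    have := congrArg Prod.fst he; simpa [smul_eq_mul] using this
  nlinarith

private lemma spine_path' {V : Type*} {G : SimpleGraph V} {k : ℕ} {w : Fin k → V}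
    (hw : Function.Injective w)
    (hadj : ∀ a b : Fin k, (a : ℕ) + 1 = (b : ℕ) → G.Adj (w a) (w b)) :
    ∀ (n : ℕ) (a b : Fin k), (b : ℕ) = (a : ℕ) + n →
      ∃ P : G.Walk (w a) (w b), P.IsPath ∧
        (∀ x ∈ P.support, ∃ c : Fin k, (a : ℕ) ≤ (c : ℕ) ∧ (c : ℕ) ≤ (b : ℕ) ∧ x = w c) ∧
        (∀ c : Fin k, (a : ℕ) ≤ (c : ℕ) → (c : ℕ) ≤ (b : ℕ) → w c ∈ P.support) := by
  intro n
  induction n with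
  | zero =>
    intro a b hb
    have hab : a = b := Fin.ext (by omega)
    subst hab
    refine ⟨SimpleGraph.Walk.nil, SimpleGraph.Walk.IsPath.nil, ?_, ?_⟩
    · intro x hx
      simp only [SimpleGraph.Walk.support_nil, List.mem_singleton] at hx
      exact ⟨a, le_refl _, le_refl _, hx⟩
    · intro c h1 h2
      have : c = a := Fin.ext (by omega)
      subst this
      simp
  | succ n ih =>
    intro a b hb
    have ha1 : (a : ℕ) + 1 < k := by have := b.isLt; omega
    set a' : Fin k := ⟨(a : ℕ) + 1, ha1⟩ with ha'def
    have ha'v : (a' : ℕ) = (a : ℕ) + 1 := rfl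
    obtain ⟨P, hP, hsub, hmem⟩ := ih a' b (by omega)
    refine ⟨SimpleGraph.Walk.cons (hadj a a' ha'v.symm) P, ?_, ?_, ?_⟩
    · rw [SimpleGraph.Walk.cons_isPath_iff]
      refine ⟨hP, fun hmem' => ?_⟩
      obtain ⟨c, hc1, hc2, hc3⟩ := hsub _ hmem'
      have h4 : a = c := hw hc3
      have h5 : (a : ℕ) = (c : ℕ) := by rw [h4]
      omega
    · intro x hx
      rw [SimpleGraph.Walk.support_cons] at hx
      rcases List.mem_cons.mp hx with h | h
      · exact ⟨a, le_refl _, by omega, h⟩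
      · obtain ⟨c, h1, h2, h3⟩ := hsub x h
        exact ⟨c, by omega, h2, h3⟩
    · intro c h1 h2
      rw [SimpleGraph.Walk.support_cons]
      rcases eq_or_lt_of_le h1 with h | h
      · have : c = a := Fin.ext (by omega)
        subst this
        exact List.mem_cons_self
      · exact List.mem_cons_of_mem _ (hmem c (by omega) h2)

set_option maxHeartbeats 2000000 in
/-- A caterpillar tree admits a crossing-free straight-line drawing with
arbitrary prescribed distinct `y`-coordinates. -/
theorem statement6 {V : Type*} [Fintype V] (G : SimpleGraph V)
    (hG : IsCaterpillar G) (hn : 2 ≤ Fintype.card V)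
    (y : V → ℝ) (hy : Function.Injective y) :
    ∃ x : V → ℝ, CrossingFree G (fun v => (x v, y v)) := by
  classical
  obtain ⟨hconn, hacyc, k, w, hw, hadj, hcov⟩ := hG
  have huniq : ∀ {u v : V} (P Q : G.Walk u v), P.IsPath → Q.IsPath → P = Q := by
    intro u v P Q hP hQ
    exact congrArg Subtype.val (hacyc.path_unique ⟨P, hP⟩ ⟨Q, hQ⟩)
  have hspine := spine_path' hw hadj
  have haux5 : ∀ a b : Fin k, (a : ℕ) < (b : ℕ) → G.Adj (w a) (w b) → (a : ℕ) + 1 = (b : ℕ) := by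
    intro a b hlt hab
    by_contra hcon
    obtain ⟨P, hP, hsub, hmem⟩ := hspine ((b : ℕ) - (a : ℕ)) a b (by omega)
    have hQ : (SimpleGraph.Walk.cons hab SimpleGraph.Walk.nil).IsPath := by
      rw [SimpleGraph.Walk.cons_isPath_iff]
      refine ⟨SimpleGraph.Walk.IsPath.nil, ?_⟩
      simp only [SimpleGraph.Walk.support_nil, List.mem_singleton]
      exact fun h => hab.ne h
    have heq := huniq P _ hP hQ
    have ha1 : (a : ℕ) + 1 < k := by have := b.isLt; omega
    have hv : ((⟨(a : ℕ) + 1, ha1⟩ : Fin k) : ℕ) = (a : ℕ) + 1 := rfl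
    have h1 := hmem ⟨(a : ℕ) + 1, ha1⟩ (by omega) (by omega)
    rw [heq] at h1
    simp only [SimpleGraph.Walk.support_cons, SimpleGraph.Walk.support_nil,
      List.mem_cons, List.mem_singleton, List.not_mem_nil, or_false] at h1
    rcases h1 with h | h
    · have h2 := congrArg Fin.val (hw h)
      omega
    · have h2 := congrArg Fin.val (hw h)
      omega
  have hF5 : ∀ a b : Fin k, G.Adj (w a) (w b) → (a : ℕ) + 1 = (b : ℕ) ∨ (b : ℕ) + 1 = (a : ℕ) := by
    intro a b hab
    rcases lt_trichotomy ((a : ℕ)) ((b : ℕ)) with h | h | h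
    · exact Or.inl (haux5 a b h hab)
    · exact absurd (congrArg w (Fin.ext h)) hab.ne
    · exact Or.inr (haux5 b a h hab.symm)
  have hrange : ∀ v : V, v ∉ Set.range w → ∃ a, G.Adj v (w a) :=
    fun v h => (hcov v).resolve_left h
  have haux3 : ∀ l : V, l ∉ Set.range w → ∀ a b : Fin k, (a : ℕ) < (b : ℕ) →
      G.Adj l (w a) → G.Adj l (w b) → False := by
    intro l hl a b hlt hla hlb
    obtain ⟨P, hP, hsub, hmem⟩ := hspine ((b : ℕ) - (a : ℕ)) a b (by omega)
    have hQ : (SimpleGraph.Walk.cons hla.symm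
        (SimpleGraph.Walk.cons hlb SimpleGraph.Walk.nil)).IsPath := by
      rw [SimpleGraph.Walk.isPath_def]
      simp only [SimpleGraph.Walk.support_cons, SimpleGraph.Walk.support_nil]
      have h1 : w a ≠ l := fun h => hl ⟨a, h⟩
      have h2 : w a ≠ w b := fun h => absurd (congrArg Fin.val (hw h)) (by omega)
      have h3 : l ≠ w b := fun h => hl ⟨b, h.symm⟩
      simp [h1, h2, h3]
    have heq := huniq P _ hP hQ
    have hmem' : l ∈ P.support := by rw [heq]; simp
    obtain ⟨c, _, _, hc⟩ := hsub l hmem'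
    exact hl ⟨c, hc.symm⟩
  have haux4 : ∀ (u v : V) (a b : Fin k), u ∉ Set.range w → v ∉ Set.range w →
      G.Adj u v → G.Adj u (w a) → G.Adj v (w b) → (a : ℕ) < (b : ℕ) → False := by
    intro u v a b hu hv huv hua hvb hlt
    obtain ⟨P, hP, hsub, hmem⟩ := hspine ((b : ℕ) - (a : ℕ)) a b (by omega)
    have hQ : (SimpleGraph.Walk.cons hua.symm (SimpleGraph.Walk.cons huv
        (SimpleGraph.Walk.cons hvb SimpleGraph.Walk.nil))).IsPath := by
      rw [SimpleGraph.Walk.isPath_def]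
      simp only [SimpleGraph.Walk.support_cons, SimpleGraph.Walk.support_nil]
      have h1 : w a ≠ u := fun h => hu ⟨a, h⟩
      have h2 : w a ≠ v := fun h => hv ⟨a, h⟩
      have h3 : w a ≠ w b := fun h => absurd (congrArg Fin.val (hw h)) (by omega)
      have h4 : u ≠ v := huv.ne
      have h5 : u ≠ w b := fun h => hu ⟨b, h.symm⟩
      have h6 : v ≠ w b := fun h => hv ⟨b, h.symm⟩
      simp [h1, h2, h3, h4, h5, h6]
    have heq := huniq P _ hP hQ
    have hmem' : u ∈ P.support := by rw [heq]; simp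
    obtain ⟨c, _, _, hc⟩ := hsub u hmem'
    exact hu ⟨c, hc.symm⟩
  have haux4' : ∀ (u v : V) (a : Fin k), u ∉ Set.range w → v ∉ Set.range w →
      G.Adj u v → G.Adj u (w a) → G.Adj v (w a) → False := by
    intro u v a hu hv huv hua hva
    have hQ1 : (SimpleGraph.Walk.cons hua.symm SimpleGraph.Walk.nil).IsPath := by
      rw [SimpleGraph.Walk.isPath_def]
      simp only [SimpleGraph.Walk.support_cons, SimpleGraph.Walk.support_nil]
      have h1 : w a ≠ u := fun h => hu ⟨a, h⟩
      simp [h1]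
    have hQ2 : (SimpleGraph.Walk.cons hva.symm (SimpleGraph.Walk.cons huv.symm
        SimpleGraph.Walk.nil)).IsPath := by
      rw [SimpleGraph.Walk.isPath_def]
      simp only [SimpleGraph.Walk.support_cons, SimpleGraph.Walk.support_nil]
      have h1 : w a ≠ v := fun h => hv ⟨a, h⟩
      have h2 : w a ≠ u := fun h => hu ⟨a, h⟩
      have h3 : v ≠ u := huv.ne'
      simp [h1, h2, h3]
    have heq := huniq _ _ hQ1 hQ2
    have := congrArg SimpleGraph.Walk.support heq
    simp only [SimpleGraph.Walk.support_cons, SimpleGraph.Walk.support_nil] at this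
    exact absurd (congrArg List.length this) (by simp)
  have hF4 : ∀ u v : V, G.Adj u v → u ∈ Set.range w ∨ v ∈ Set.range w := by
    intro u v huv
    by_contra hc
    push_neg at hc
    obtain ⟨hu, hv⟩ := hc
    obtain ⟨a, hua⟩ := hrange u hu
    obtain ⟨b, hvb⟩ := hrange v hv
    rcases lt_trichotomy ((a : ℕ)) ((b : ℕ)) with h | h | h
    · exact haux4 u v a b hu hv huv hua hvb h
    · have hab : a = b := Fin.ext h
      subst hab
      exact haux4' u v a hu hv huv hua hvb
    · exact haux4 v u b a hv hu huv.symm hvb hua h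
  have hidx0 : ∀ v : V, ∃ c : Fin k, v = w c ∨ (v ∉ Set.range w ∧ G.Adj v (w c)) := by
    intro v
    by_cases h : v ∈ Set.range w
    · obtain ⟨c, hc⟩ := h
      exact ⟨c, Or.inl hc.symm⟩
    · obtain ⟨c, hc⟩ := hrange v h
      exact ⟨c, Or.inr ⟨h, hc⟩⟩
  choose idx hidxs using hidx0
  have hidxw : ∀ c : Fin k, idx (w c) = c := by
    intro c
    rcases hidxs (w c) with h | h
    · exact (hw h).symm
    · exact absurd ⟨c, rfl⟩ h.1
  have hidxl : ∀ v, v ∉ Set.range w → G.Adj v (w (idx v)) := by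
    intro v hv
    rcases hidxs v with h | h
    · exact absurd ⟨idx v, h.symm⟩ hv
    · exact h.2
  have hF3 : ∀ l, l ∉ Set.range w → ∀ a b : Fin k, G.Adj l (w a) → G.Adj l (w b) → a = b := by
    intro l hl a b ha hb
    rcases lt_trichotomy ((a : ℕ)) ((b : ℕ)) with h | h | h
    · exact (haux3 l hl a b h ha hb).elim
    · exact Fin.ext h
    · exact (haux3 l hl b a h hb ha).elim
  have hidxu : ∀ (v) (c : Fin k), v ∉ Set.range w → G.Adj v (w c) → idx v = c :=
    fun v c hv h => hF3 v hv (idx v) c (hidxl v hv) h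
  have canon : ∀ u v : V, G.Adj u v → ∃ (c : Fin k) (z : V),
      ({u, v} : Set V) = {w c, z} ∧
      ((∃ hc : (c : ℕ) + 1 < k, z = w ⟨(c : ℕ) + 1, hc⟩) ∨
        (z ∉ Set.range w ∧ idx z = c)) := by
    intro u v huv
    by_cases hu : u ∈ Set.range w
    · obtain ⟨a, rfl⟩ := hu
      by_cases hv : v ∈ Set.range w
      · obtain ⟨b, rfl⟩ := hv
        rcases hF5 a b huv with h | h
        · have hbk : (a : ℕ) + 1 < k := by have := b.isLt; omega
          exact ⟨a, w b, rfl, Or.inl ⟨hbk, congrArg w (Fin.ext h.symm)⟩⟩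
        · have hak : (b : ℕ) + 1 < k := by have := a.isLt; omega
          exact ⟨b, w a, Set.pair_comm _ _, Or.inl ⟨hak, congrArg w (Fin.ext h.symm)⟩⟩
      · exact ⟨a, v, rfl, Or.inr ⟨hv, hidxu v a hv huv.symm⟩⟩
    · have hv : v ∈ Set.range w := (hF4 u v huv).resolve_left hu
      obtain ⟨b, rfl⟩ := hv
      exact ⟨b, u, Set.pair_comm u (w b), Or.inr ⟨hu, hidxu u b hu huv⟩⟩
  set S : ℝ := ∑ u : V, ∑ v : V, |y u - y v| with hSdef
  set Q : ℝ := ∑ v : V, (y v - y (w (idx v)))^2 with hQdef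
  set M : ℝ := 1 + Q + S^2 with hMdef
  have hQ0 : (0:ℝ) ≤ Q := Finset.sum_nonneg fun v _ => sq_nonneg _
  have hS0 : (0:ℝ) ≤ S := Finset.sum_nonneg fun u _ => Finset.sum_nonneg fun v _ => abs_nonneg _
  have hM0 : (0:ℝ) < M := by rw [hMdef]; nlinarith [sq_nonneg S]
  have hsqM : ∀ v : V, (y v - y (w (idx v)))^2 < M := by
    intro v
    have h1 : (y v - y (w (idx v)))^2 ≤ Q := by
      rw [hQdef]
      exact Finset.single_le_sum (f := fun v => (y v - y (w (idx v)))^2)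
        (fun i _ => sq_nonneg _) (Finset.mem_univ v)
    rw [hMdef]; nlinarith [sq_nonneg S]
  have hSb : ∀ u v : V, |y u - y v| ≤ S := by
    intro u v
    have h1 : |y u - y v| ≤ ∑ v' : V, |y u - y v'| :=
      Finset.single_le_sum (f := fun v' => |y u - y v'|) (fun i _ => abs_nonneg _)
        (Finset.mem_univ v)
    have h2 : (∑ v' : V, |y u - y v'|) ≤ S := by
      rw [hSdef]
      exact Finset.single_le_sum (f := fun u => ∑ v' : V, |y u - y v'|)
        (fun i _ => Finset.sum_nonneg fun _ _ => abs_nonneg _) (Finset.mem_univ u)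
    linarith
  have hprod : ∀ u v u' v' : V, |y u - y v| * |y u' - y v'| < M := by
    intro u v u' v'
    have h1 := mul_le_mul (hSb u v) (hSb u' v') (abs_nonneg _) hS0
    rw [hMdef]; nlinarith
  set x : V → ℝ := fun v => ((idx v : ℕ) : ℝ) * M +
      (if v ∈ Set.range w then 0 else (y v - y (w (idx v)))^2) with hxdef
  have hxw : ∀ c : Fin k, x (w c) = ((c : ℕ) : ℝ) * M := by
    intro c
    simp only [hxdef]
    rw [hidxw c, if_pos ⟨c, rfl⟩, add_zero]
  have hxleaf : ∀ v, v ∉ Set.range w → x v = ((idx v : ℕ) : ℝ) * M + (y v - y (w (idx v)))^2 := by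
    intro v hv
    simp only [hxdef]
    rw [if_neg hv]
  have hyne : ∀ v, v ∉ Set.range w → y v - y (w (idx v)) ≠ 0 := by
    intro v hv h
    exact hv ⟨idx v, (hy (sub_eq_zero.mp h)).symm⟩
  have hbnd : ∀ (c : Fin k) (z : V),
      ((∃ hc : (c : ℕ) + 1 < k, z = w ⟨(c : ℕ) + 1, hc⟩) ∨ (z ∉ Set.range w ∧ idx z = c)) →
      ((c : ℕ) : ℝ) * M < x z ∧ x z ≤ (((c : ℕ) : ℝ) + 1) * M := by
    intro c z h
    rcases h with ⟨hc, rfl⟩ | ⟨hzr, hzi⟩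
    · rw [hxw ⟨(c : ℕ) + 1, hc⟩]
      have h0 : ((⟨(c : ℕ) + 1, hc⟩ : Fin k) : ℕ) = (c : ℕ) + 1 := rfl
      rw [h0]
      push_cast
      constructor
      · nlinarith
      · linarith
    · rw [hxleaf z hzr, hzi]
      have h1 : (0:ℝ) < (y z - y (w c))^2 := by
        have h2 := hyne z hzr
        rw [hzi] at h2
        positivity
      have h2 : (y z - y (w c))^2 < M := by
        have h3 := hsqM z
        rwa [hzi] at h3
      constructor <;> nlinarith
  have key : ∀ (c d : Fin k) (z z' : V), (c : ℕ) ≤ (d : ℕ) →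
      ((∃ hc : (c : ℕ) + 1 < k, z = w ⟨(c : ℕ) + 1, hc⟩) ∨ (z ∉ Set.range w ∧ idx z = c)) →
      ((∃ hd : (d : ℕ) + 1 < k, z' = w ⟨(d : ℕ) + 1, hd⟩) ∨ (z' ∉ Set.range w ∧ idx z' = d)) →
      ({w c, z} : Set V) ≠ {w d, z'} →
      segment ℝ (x (w c), y (w c)) (x z, y z) ∩ segment ℝ (x (w d), y (w d)) (x z', y z') ⊆
        ({(x (w c), y (w c)), (x z, y z)} : Set (ℝ × ℝ)) ∩ {(x (w d), y (w d)), (x z', y z')} := by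
    intro c d z z' hle h1 h2 hne
    have hzb := hbnd c z h1
    have hz'b := hbnd d z' h2
    rcases eq_or_lt_of_le hle with hcd | hcd
    · -- same spine vertex
      have hcdF : c = d := Fin.ext hcd
      subst hcdF
      rcases h1 with ⟨hc1, rfl⟩ | ⟨hzr, hzi⟩
      · rcases h2 with ⟨hd1, rfl⟩ | ⟨hz'r, hz'i⟩
        · exact absurd rfl hne
        · -- spine-next and leaf, common endpoint w c
          intro P hP
          have hdyl : y z' - y (w c) ≠ 0 := by
            have := hyne z' hz'r; rwa [hz'i] at this
          have hx1 : x (w ⟨(c : ℕ) + 1, hc1⟩) - x (w c) = M := by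
            rw [hxw, hxw]
            have h0 : ((⟨(c : ℕ) + 1, hc1⟩ : Fin k) : ℕ) = (c : ℕ) + 1 := rfl
            rw [h0]; push_cast; ring
          have hx2 : x z' - x (w c) = (y z' - y (w c))^2 := by
            rw [hxleaf z' hz'r, hz'i, hxw]; ring
          have hPA : P = (x (w c), y (w c)) := by
            refine seg_common' ?_ ?_ P hP.1 hP.2
            · intro s t hs ht
              refine cross_imp' ?_ hs ht
              show (x (w ⟨(c : ℕ) + 1, hc1⟩) - x (w c)) * (y z' - y (w c)) ≠
                (y (w ⟨(c : ℕ) + 1, hc1⟩) - y (w c)) * (x z' - x (w c))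
              rw [hx1, hx2]
              intro hEq
              have h6 : M = (y (w ⟨(c : ℕ) + 1, hc1⟩) - y (w c)) * (y z' - y (w c)) := by
                apply mul_right_cancel₀ hdyl
                rw [hEq]; ring
              have h7 := hprod (w ⟨(c : ℕ) + 1, hc1⟩) (w c) z' (w c)
              have h8 := abs_mul (y (w ⟨(c : ℕ) + 1, hc1⟩) - y (w c)) (y z' - y (w c))
              have h9 := le_abs_self ((y (w ⟨(c : ℕ) + 1, hc1⟩) - y (w c)) * (y z' - y (w c)))
              linarith
            · intro h
              have h5 : x (w ⟨(c : ℕ) + 1, hc1⟩) = x (w c) := congrArg Prod.fst h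
              rw [h5, sub_self] at hx1
              linarith
          rw [hPA]
          exact ⟨by simp, by simp⟩
      · rcases h2 with ⟨hd1, rfl⟩ | ⟨hz'r, hz'i⟩
        · -- leaf and spine-next, common endpoint w c
          intro P hP
          have hdyl : y z - y (w c) ≠ 0 := by
            have := hyne z hzr; rwa [hzi] at this
          have hx1 : x (w ⟨(c : ℕ) + 1, hd1⟩) - x (w c) = M := by
            rw [hxw, hxw]
            have h0 : ((⟨(c : ℕ) + 1, hd1⟩ : Fin k) : ℕ) = (c : ℕ) + 1 := rfl
            rw [h0]; push_cast; ring
          have hx2 : x z - x (w c) = (y z - y (w c))^2 := by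
            rw [hxleaf z hzr, hzi, hxw]; ring
          have hPA : P = (x (w c), y (w c)) := by
            refine seg_common' ?_ ?_ P hP.1 hP.2
            · intro s t hs ht
              refine cross_imp' ?_ hs ht
              show (x z - x (w c)) * (y (w ⟨(c : ℕ) + 1, hd1⟩) - y (w c)) ≠
                (y z - y (w c)) * (x (w ⟨(c : ℕ) + 1, hd1⟩) - x (w c))
              rw [hx1, hx2]
              intro hEq
              have h6 : M = (y z - y (w c)) * (y (w ⟨(c : ℕ) + 1, hd1⟩) - y (w c)) := by
                apply mul_left_cancel₀ hdyl
                rw [← hEq]; ring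
              have h7 := hprod z (w c) (w ⟨(c : ℕ) + 1, hd1⟩) (w c)
              have h8 := abs_mul (y z - y (w c)) (y (w ⟨(c : ℕ) + 1, hd1⟩) - y (w c))
              have h9 := le_abs_self ((y z - y (w c)) * (y (w ⟨(c : ℕ) + 1, hd1⟩) - y (w c)))
              linarith
            · intro h
              have h5 : x z = x (w c) := congrArg Prod.fst h
              rw [h5, sub_self] at hx2
              exact pow_ne_zero 2 hdyl hx2.symm
          rw [hPA]
          exact ⟨by simp, by simp⟩
        · -- two leaves, common endpoint w c
          intro P hP
          have hzz' : z ≠ z' := by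
            intro h; exact hne (by rw [h])
          have hd1 : y z - y (w c) ≠ 0 := by have := hyne z hzr; rwa [hzi] at this
          have hd2 : y z' - y (w c) ≠ 0 := by have := hyne z' hz'r; rwa [hz'i] at this
          have hd3 : y z - y (w c) ≠ y z' - y (w c) := by
            intro h
            have h4 : y z = y z' := by linarith
            exact hzz' (hy h4)
          have hx2 : x z - x (w c) = (y z - y (w c))^2 := by
            rw [hxleaf z hzr, hzi, hxw]; ring
          have hx3 : x z' - x (w c) = (y z' - y (w c))^2 := by
            rw [hxleaf z' hz'r, hz'i, hxw]; ring
          have hPA : P = (x (w c), y (w c)) := by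
            refine seg_common' ?_ ?_ P hP.1 hP.2
            · intro s t hs ht
              refine cross_imp' ?_ hs ht
              show (x z - x (w c)) * (y z' - y (w c)) ≠
                (y z - y (w c)) * (x z' - x (w c))
              rw [hx2, hx3]
              intro hEq
              apply hd3
              have h9 : (y z - y (w c)) * (y z' - y (w c)) *
                  ((y z - y (w c)) - (y z' - y (w c))) = 0 := by linear_combination hEq
              rcases mul_eq_zero.mp h9 with h9' | h9'
              · rcases mul_eq_zero.mp h9' with h9'' | h9''
                · exact absurd h9'' hd1
                · exact absurd h9'' hd2
              · linarith
            · intro h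
              have h5 : x z = x (w c) := congrArg Prod.fst h
              rw [h5, sub_self] at hx2
              exact pow_ne_zero 2 hd1 hx2.symm
          rw [hPA]
          exact ⟨by simp, by simp⟩
    · -- c < d
      rcases eq_or_lt_of_le (Nat.succ_le_of_lt hcd) with hcd1 | hcd2
      · -- d = c + 1
        rcases h1 with ⟨hc1, rfl⟩ | ⟨hzr, hzi⟩
        · -- spine edge c -- c+1; common endpoint w d = w ⟨c+1⟩
          have hzd : (⟨(c : ℕ) + 1, hc1⟩ : Fin k) = d := Fin.ext hcd1
          subst hzd
          intro P hP
          have hP1 := hP.1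
          rw [segment_symm] at hP1
          have h0 : ((⟨(c : ℕ) + 1, hc1⟩ : Fin k) : ℕ) = (c : ℕ) + 1 := rfl
          have hPA : P = (x (w ⟨(c : ℕ) + 1, hc1⟩), y (w ⟨(c : ℕ) + 1, hc1⟩)) := by
            refine seg_common' ?_ ?_ P hP1 hP.2
            · intro s t hs ht
              refine opp_imp' ?_ ?_ hs ht
              · show x (w c) - x (w ⟨(c : ℕ) + 1, hc1⟩) < 0
                rw [hxw, hxw, h0]
                push_cast
                nlinarith
              · show 0 < x z' - x (w ⟨(c : ℕ) + 1, hc1⟩)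
                have h3 := hz'b.1
                rw [hxw]
                linarith
            · intro h
              have h5 : x (w c) = x (w ⟨(c : ℕ) + 1, hc1⟩) := congrArg Prod.fst h
              rw [hxw, hxw, h0] at h5
              push_cast at h5
              nlinarith
          rw [hPA]
          exact ⟨by simp, by simp⟩
        · -- leaf edge at c, other edge starts at d = c+1 : separated at x z
          intro P hP
          exfalso
          have hdc : ((d : ℕ) : ℝ) = ((c : ℕ) : ℝ) + 1 := by exact_mod_cast hcd1.symm
          have hxz : x z = ((c : ℕ) : ℝ) * M + (y z - y (w c))^2 := by
            rw [hxleaf z hzr, hzi]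
          have hsq : (y z - y (w c))^2 < M := by
            have := hsqM z; rwa [hzi] at this
          have e1 : x (w c) ≤ x z := by rw [hxw]; linarith [hzb.1]
          have e3 : x z < x (w d) := by rw [hxw, hdc]; nlinarith
          have e4 : x z < x z' := by
            have h3 := hz'b.1
            rw [hdc] at h3
            nlinarith
          exact absurd (seg_fst_le' e1 (le_refl (x z)) hP.1)
            (not_le.2 (seg_fst_lt' e3 e4 hP.2))
      · -- d ≥ c + 2 : separated at (c+1) * M
        intro P hP
        exfalso
        have hd2 : ((c : ℕ) : ℝ) + 2 ≤ ((d : ℕ) : ℝ) := by exact_mod_cast hcd2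
        have hmul : (((c : ℕ) : ℝ) + 2) * M ≤ ((d : ℕ) : ℝ) * M :=
          mul_le_mul_of_nonneg_right hd2 hM0.le
        have e1 : x (w c) ≤ (((c : ℕ) : ℝ) + 1) * M := by rw [hxw]; nlinarith
        have e3 : (((c : ℕ) : ℝ) + 1) * M < x (w d) := by rw [hxw]; nlinarith
        have e4 : (((c : ℕ) : ℝ) + 1) * M < x z' := by nlinarith [hz'b.1]
        exact absurd (seg_fst_le' e1 hzb.2 hP.1)
          (not_le.2 (seg_fst_lt' e3 e4 hP.2))
  have main : ∀ (c d : Fin k) (z z' : V),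
      ((∃ hc : (c : ℕ) + 1 < k, z = w ⟨(c : ℕ) + 1, hc⟩) ∨ (z ∉ Set.range w ∧ idx z = c)) →
      ((∃ hd : (d : ℕ) + 1 < k, z' = w ⟨(d : ℕ) + 1, hd⟩) ∨ (z' ∉ Set.range w ∧ idx z' = d)) →
      ({w c, z} : Set V) ≠ {w d, z'} →
      segment ℝ (x (w c), y (w c)) (x z, y z) ∩ segment ℝ (x (w d), y (w d)) (x z', y z') ⊆
        ({(x (w c), y (w c)), (x z, y z)} : Set (ℝ × ℝ)) ∩ {(x (w d), y (w d)), (x z', y z')} := by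
    intro c d z z' h1 h2 hne
    rcases le_total ((c : ℕ)) ((d : ℕ)) with h | h
    · exact key c d z z' h h1 h2 hne
    · intro P hP
      have h3 := key d c z' z h h2 h1 (Ne.symm hne) ⟨hP.2, hP.1⟩
      exact ⟨h3.2, h3.1⟩
  refine ⟨x, ?_, ?_⟩
  · intro a b hab
    exact hy (congrArg Prod.snd hab)
  · intro u₁ v₁ u₂ v₂ h1 h2 hne
    obtain ⟨c, z, hs1, hc1⟩ := canon u₁ v₁ h1
    obtain ⟨d, z', hs2, hc2⟩ := canon u₂ v₂ h2
    have conv : ∀ (a b : V) (c0 : Fin k) (z0 : V), ({a, b} : Set V) = {w c0, z0} →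
        segment ℝ (x a, y a) (x b, y b) = segment ℝ (x (w c0), y (w c0)) (x z0, y z0) ∧
        ({(x a, y a), (x b, y b)} : Set (ℝ × ℝ)) = {(x (w c0), y (w c0)), (x z0, y z0)} := by
      intro a b c0 z0 hpair
      rcases Set.pair_eq_pair_iff.mp hpair with ⟨rfl, rfl⟩ | ⟨rfl, rfl⟩
      · exact ⟨rfl, rfl⟩
      · exact ⟨segment_symm ℝ _ _, Set.pair_comm _ _⟩
    obtain ⟨e1, q1⟩ := conv u₁ v₁ c z hs1
    obtain ⟨e2, q2⟩ := conv u₂ v₂ d z' hs2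
    dsimp only
    rw [e1, q1, e2, q2]
    refine main c d z z' hc1 hc2 ?_
    rw [← hs1, ← hs2]
    exact hne
end

section
/- Let G be a cycle on vertices v_1, …, v_n (n ≥ 3) and let y_1, …, y_n be arbitrary distinct real numbers. Then there exist real numbers x_1, …, x_n such that the straight-line drawing of the cycle with v_i placed at (x_i, y_i) is crossing-free. -/
private lemma seg_param {p1 p2 z : ℝ × ℝ} (h : z ∈ segment ℝ p1 p2) :
    ∃ t : ℝ, 0 ≤ t ∧ t ≤ 1 ∧ z.1 = (1-t)*p1.1 + t*p2.1 ∧ z.2 = (1-t)*p1.2 + t*p2.2 := by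
  obtain ⟨a, b, ha, hb, hab, hz⟩ := h
  refine ⟨b, hb, by linarith, ?_, ?_⟩
  · rw [← hz]
    have h' : (a • p1 + b • p2).1 = a * p1.1 + b * p2.1 := rfl
    rw [h']; linear_combination p1.1 * hab
  · rw [← hz]
    have h' : (a • p1 + b • p2).2 = a * p1.2 + b * p2.2 := rfl
    rw [h']; linear_combination p1.2 * hab

/-- two x-monotone segments with separated x-windows are disjoint -/
private lemma seg_disjoint_x {p1 p2 p3 p4 z : ℝ × ℝ} (h12 : p1.1 ≤ p2.1)
    (h23 : p2.1 < p3.1) (h34 : p3.1 ≤ p4.1)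
    (hz1 : z ∈ segment ℝ p1 p2) (hz2 : z ∈ segment ℝ p3 p4) : False := by
  obtain ⟨t, ht0, ht1, hx1, -⟩ := seg_param hz1
  obtain ⟨s, hs0, hs1, hx2, -⟩ := seg_param hz2
  nlinarith [mul_nonneg (by linarith : (0:ℝ) ≤ 1 - t) (by linarith : (0:ℝ) ≤ p2.1 - p1.1),
    mul_nonneg hs0 (by linarith : (0:ℝ) ≤ p4.1 - p3.1)]

/-- two x-monotone segments whose windows touch at one x meet only at that point -/
private lemma seg_touch {p1 p2 p4 z : ℝ × ℝ} (h12 : p1.1 < p2.1) (h24 : p2.1 < p4.1)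
    (hz1 : z ∈ segment ℝ p1 p2) (hz2 : z ∈ segment ℝ p2 p4) : z = p2 := by
  obtain ⟨t, ht0, ht1, hx1, hy1⟩ := seg_param hz1
  obtain ⟨s, hs0, hs1, hx2, -⟩ := seg_param hz2
  have ht : t = 1 := by
    nlinarith [mul_nonneg (by linarith : (0:ℝ) ≤ 1 - t) (by linarith : (0:ℝ) ≤ p2.1 - p1.1),
      mul_nonneg hs0 (by linarith : (0:ℝ) ≤ p4.1 - p2.1)]
  subst ht
  exact Prod.ext (by rw [hx1]; ring) (by rw [hy1]; ring)

/-- two segments from a common endpoint with non-parallel directions meet only there -/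
private lemma seg_shared {p p1 p2 z : ℝ × ℝ}
    (hc : (p1.1 - p.1) * (p2.2 - p.2) - (p1.2 - p.2) * (p2.1 - p.1) ≠ 0)
    (hz1 : z ∈ segment ℝ p p1) (hz2 : z ∈ segment ℝ p p2) : z = p := by
  obtain ⟨t, ht0, ht1, hx1, hy1⟩ := seg_param hz1
  obtain ⟨s, hs0, hs1, hx2, hy2⟩ := seg_param hz2
  have h1 : t * (p1.1 - p.1) = s * (p2.1 - p.1) := by linarith
  have h2 : t * (p1.2 - p.2) = s * (p2.2 - p.2) := by linarith
  have key : t * s * ((p1.1 - p.1) * (p2.2 - p.2) - (p1.2 - p.2) * (p2.1 - p.1)) = 0 := by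
    linear_combination (s * (p2.2 - p.2)) * h1 - (s * (p2.1 - p.1)) * h2
  rcases mul_eq_zero.1 key with hts | hcross
  · rcases mul_eq_zero.1 hts with ht | hs
    · subst ht; exact Prod.ext (by rw [hx1]; ring) (by rw [hy1]; ring)
    · subst hs; exact Prod.ext (by rw [hx2]; ring) (by rw [hy2]; ring)
  · exact absurd hcross hc

/-- a segment staying strictly below the level `pl.2 + g` cannot meet a segment whose
endpoints are at height `≥ pl.2 + g` -/
private lemma seg_below {pl pr p3 p4 z : ℝ × ℝ} {g : ℝ}
    (hlr : pl.1 < pr.1) (hY : pl.2 ≤ pr.2)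
    (hb3 : pl.2 + g ≤ p3.2) (hb4 : pl.2 + g ≤ p4.2) (h34 : p3.1 ≤ p4.1)
    (hkey : (p4.1 - pl.1) * (pr.2 - pl.2) < g * (pr.1 - pl.1))
    (hz1 : z ∈ segment ℝ pl pr) (hz2 : z ∈ segment ℝ p3 p4) : False := by
  obtain ⟨t, ht0, ht1, hx1, hy1⟩ := seg_param hz1
  obtain ⟨s, hs0, hs1, hx2, hy2⟩ := seg_param hz2
  have hA : t * (pr.1 - pl.1) ≤ p4.1 - pl.1 := by
    nlinarith [mul_nonneg (by linarith : (0:ℝ) ≤ 1 - s) (by linarith : (0:ℝ) ≤ p4.1 - p3.1)]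
  have hB : g ≤ t * (pr.2 - pl.2) := by
    nlinarith [mul_nonneg (by linarith : (0:ℝ) ≤ 1 - s) (by linarith : (0:ℝ) ≤ p3.2 - (pl.2 + g)),
      mul_nonneg hs0 (by linarith : (0:ℝ) ≤ p4.2 - (pl.2 + g))]
  nlinarith [mul_le_mul_of_nonneg_right hA (by linarith : (0:ℝ) ≤ pr.2 - pl.2), mul_le_mul_of_nonneg_right hB (le_of_lt (by linarith : (0:ℝ) < pr.1 - pl.1))]


private lemma cycle_key (n : ℕ) (hn : 3 ≤ n) (Y X : ℕ → ℝ) (g D M : ℝ)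
    (hg : 0 < g) (hgD : g ≤ D)
    (hYg : ∀ k, 1 ≤ k → k ≤ n - 1 → Y 0 + g ≤ Y k)
    (hYD : ∀ k, 1 ≤ k → k ≤ n - 1 → Y k ≤ Y 0 + D)
    (hMn : (n:ℝ) ≤ M)
    (hM5 : ((n:ℝ) - 2) * D < g * (M - n + 1))
    (hX1 : ∀ k, k ≤ n - 2 → X k = (k:ℝ) + 1)
    (hX2 : X (n-1) = M)
    (a b c d : ℕ)
    (hab : (b = a + 1 ∧ b ≤ n - 1) ∨ (a = n - 1 ∧ b = 0))
    (hcd : (d = c + 1 ∧ d ≤ n - 1) ∨ (c = n - 1 ∧ d = 0))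
    (hne : ¬(a = c ∧ b = d)) :
    segment ℝ (X a, Y a) (X b, Y b) ∩ segment ℝ (X c, Y c) (X d, Y d) ⊆
      ({(X a, Y a), (X b, Y b)} : Set (ℝ × ℝ)) ∩ {(X c, Y c), (X d, Y d)} := by
  have hn3 : (3:ℝ) ≤ (n:ℝ) := by exact_mod_cast hn
  have hD0 : (0:ℝ) ≤ D := le_trans hg.le hgD
  have hM3 : ((n:ℝ) - 2) * D < g * (M - 1) := by nlinarith
  have hXlt : ∀ i j : ℕ, i < j → j ≤ n - 1 → X i < X j := by
    intro i j hij hj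
    have hi2 : i ≤ n - 2 := by omega
    rw [hX1 i hi2]
    by_cases hjn : j = n - 1
    · rw [hjn, hX2]
      have : (i:ℝ) + 2 ≤ (n:ℝ) := by exact_mod_cast (show i + 2 ≤ n by omega)
      linarith
    · rw [hX1 j (by omega)]
      have : (i:ℝ) < (j:ℝ) := by exact_mod_cast hij
      linarith
  have hYc0 : Y 0 + g ≤ Y (n-1) := hYg (n-1) (by omega) le_rfl
  have hYcD : Y (n-1) ≤ Y 0 + D := hYD (n-1) (by omega) le_rfl
  -- the two "shared endpoint" cross-product facts
  have cross1 : (X 1 - X 0) * (Y (n-1) - Y 0) - (Y 1 - Y 0) * (X (n-1) - X 0) ≠ 0 := by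
    rw [hX1 0 (by omega), hX1 1 (by omega), hX2]
    have h1g : Y 0 + g ≤ Y 1 := hYg 1 le_rfl (by omega)
    have : (Y 1 - Y 0) * (M - 1) ≥ g * (M - 1) := by nlinarith
    push_cast
    nlinarith
  have cross2 : ∀ a : ℕ, a + 1 = n - 1 →
      (X a - X (n-1)) * (Y 0 - Y (n-1)) - (Y a - Y (n-1)) * (X 0 - X (n-1)) ≠ 0 := by
    intro a ha
    rw [hX1 0 (by omega), hX1 a (by omega), hX2]
    have hag : Y 0 + g ≤ Y a := hYg a (by omega) (by omega)
    have haD : Y a ≤ Y 0 + D := hYD a (by omega) (by omega)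
    have hcast : (a:ℝ) + 2 = (n:ℝ) := by exact_mod_cast (show a + 2 = n by omega)
    have hMg : g * (M - 1) ≤ (Y a - Y 0) * (M - 1) := by nlinarith
    push_cast
    nlinarith
  intro z hz
  obtain ⟨hz1, hz2⟩ := hz
  rcases hab with ⟨rfl, hb⟩ | ⟨rfl, rfl⟩ <;> rcases hcd with ⟨rfl, hd⟩ | ⟨rfl, rfl⟩
  · -- path edge (a,a+1) vs path edge (c,c+1)
    rcases lt_trichotomy a c with h | rfl | h
    · rcases eq_or_lt_of_le (show a + 1 ≤ c from h) with heq | hlt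
      · subst heq
        have hzeq : z = (X (a+1), Y (a+1)) :=
          seg_touch (hXlt a (a+1) (by omega) (by omega))
            (hXlt (a+1) (a+1+1) (by omega) hd) hz1 hz2
        rw [hzeq]; exact ⟨by simp, by simp⟩
      · exact absurd (seg_disjoint_x (le_of_lt (hXlt a (a+1) (by omega) (by omega)))
          (hXlt (a+1) c (by omega) (by omega)) (le_of_lt (hXlt c (c+1) (by omega) hd))
          hz1 hz2) (by simp)
    · exact absurd (⟨rfl, rfl⟩ : a = a ∧ a + 1 = a + 1) hne
    · rcases eq_or_lt_of_le (show c + 1 ≤ a from h) with heq | hlt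
      · subst heq
        have hzeq : z = (X (c+1), Y (c+1)) :=
          seg_touch (hXlt c (c+1) (by omega) (by omega))
            (hXlt (c+1) (c+1+1) (by omega) hb) hz2 hz1
        rw [hzeq]; exact ⟨by simp, by simp⟩
      · exact absurd (seg_disjoint_x (le_of_lt (hXlt c (c+1) (by omega) (by omega)))
          (hXlt (c+1) a (by omega) (by omega)) (le_of_lt (hXlt a (a+1) (by omega) hb))
          hz2 hz1) (by simp)
  · -- path edge (a,a+1) vs closing edge (n-1,0)
    by_cases ha0 : a = 0
    · subst ha0
      rw [segment_symm] at hz2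
      have hzeq : z = (X 0, Y 0) := seg_shared cross1 hz1 hz2
      rw [hzeq]; exact ⟨by simp, by simp⟩
    · by_cases han : a + 1 = n - 1
      · rw [han] at hz1 ⊢
        rw [segment_symm] at hz1
        have hzeq : z = (X (n-1), Y (n-1)) := seg_shared (cross2 a han) hz1 hz2
        rw [hzeq]; exact ⟨by simp, by simp⟩
      · rw [segment_symm] at hz2
        refine absurd (seg_below (pl := (X 0, Y 0)) (pr := (X (n-1), Y (n-1)))
          (hXlt 0 (n-1) (by omega) le_rfl) (by simp; linarith)
          (by simpa using hYg a (by omega) (by omega))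
          (by simpa using hYg (a+1) (by omega) (by omega))
          (le_of_lt (hXlt a (a+1) (by omega) hb)) ?_ hz2 hz1) (by simp)
        show (X (a+1) - X 0) * (Y (n-1) - Y 0) < g * (X (n-1) - X 0)
        rw [hX1 0 (by omega), hX1 (a+1) (by omega), hX2]
        have hcast : (a:ℝ) + 3 ≤ (n:ℝ) := by exact_mod_cast (show a + 3 ≤ n by omega)
        push_cast
        nlinarith
  · -- closing edge (n-1,0) vs path edge (c,c+1)
    by_cases hc0 : c = 0
    · subst hc0
      rw [segment_symm] at hz1
      have hzeq : z = (X 0, Y 0) := seg_shared cross1 hz2 hz1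
      rw [hzeq]; exact ⟨by simp, by simp⟩
    · by_cases hcn : c + 1 = n - 1
      · rw [hcn] at hz2 ⊢
        rw [segment_symm] at hz2
        have hzeq : z = (X (n-1), Y (n-1)) := seg_shared (cross2 c hcn) hz2 hz1
        rw [hzeq]; exact ⟨by simp, by simp⟩
      · rw [segment_symm] at hz1
        refine absurd (seg_below (pl := (X 0, Y 0)) (pr := (X (n-1), Y (n-1)))
          (hXlt 0 (n-1) (by omega) le_rfl) (by simp; linarith)
          (by simpa using hYg c (by omega) (by omega))
          (by simpa using hYg (c+1) (by omega) (by omega))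
          (le_of_lt (hXlt c (c+1) (by omega) hd)) ?_ hz1 hz2) (by simp)
        show (X (c+1) - X 0) * (Y (n-1) - Y 0) < g * (X (n-1) - X 0)
        rw [hX1 0 (by omega), hX1 (c+1) (by omega), hX2]
        have hcast : (c:ℝ) + 3 ≤ (n:ℝ) := by exact_mod_cast (show c + 3 ≤ n by omega)
        push_cast
        nlinarith
  · exact absurd ⟨rfl, rfl⟩ hne

open Fin.NatCast

/-- A cycle admits a crossing-free straight-line drawing with arbitrary
prescribed distinct `y`-coordinates. -/
theorem statement7 (n : ℕ) (hn : 3 ≤ n) (y : Fin n → ℝ)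
    (hy : Function.Injective y) :
    ∃ x : Fin n → ℝ,
      CrossingFree (SimpleGraph.cycleGraph n) (fun i => (x i, y i)) := by
  haveI : NeZero n := ⟨by omega⟩
  haveI : Nonempty (Fin n) := ⟨⟨0, by omega⟩⟩
  obtain ⟨m, hm⟩ := Finite.exists_min y
  set Y : ℕ → ℝ := fun k => y (m + (k : Fin n)) with hYdef
  have hY0 : Y 0 = y m := by simp [hYdef]
  have hYv : ∀ v : Fin n, Y ((v - m).val) = y v := by
    intro v
    simp only [hYdef, Fin.cast_val_eq_self]
    rw [add_comm, sub_add_cancel]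
  have hS : (Finset.Icc 1 (n-1)).Nonempty := ⟨1, Finset.mem_Icc.2 ⟨le_rfl, by omega⟩⟩
  have hkpos : ∀ k ∈ Finset.Icc 1 (n-1), Y 0 < Y k := by
    intro k hk
    rw [Finset.mem_Icc] at hk
    rw [hY0]
    rcases lt_or_eq_of_le (hm (m + (k : Fin n))) with h | h
    · exact h
    · exfalso
      have hmk : m + (k : Fin n) = m := hy h.symm
      have : ((k : Fin n) : ℕ) = 0 := by
        have : (k : Fin n) = 0 := by
          have := congrArg (· - m) hmk
          simpa [add_sub_cancel_right] using this
        simp [this]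
      rw [Fin.val_natCast] at this
      have := Nat.mod_eq_of_lt (show k < n by omega)
      omega
  set g : ℝ := (Finset.Icc 1 (n-1)).inf' hS (fun k => Y k - Y 0) with hgdef
  set D : ℝ := (Finset.Icc 1 (n-1)).sup' hS (fun k => Y k - Y 0) with hDdef
  have hg : 0 < g := by
    rw [hgdef, Finset.lt_inf'_iff]
    intro k hk
    have := hkpos k hk
    linarith
  have hYg : ∀ k, 1 ≤ k → k ≤ n - 1 → Y 0 + g ≤ Y k := by
    intro k h1 h2
    have : g ≤ Y k - Y 0 := by
      rw [hgdef]; exact Finset.inf'_le (fun k => Y k - Y 0) (Finset.mem_Icc.2 ⟨h1, h2⟩)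
    linarith
  have hYD : ∀ k, 1 ≤ k → k ≤ n - 1 → Y k ≤ Y 0 + D := by
    intro k h1 h2
    have : Y k - Y 0 ≤ D := by
      rw [hDdef]; exact Finset.le_sup' (fun k => Y k - Y 0) (Finset.mem_Icc.2 ⟨h1, h2⟩)
    linarith
  have hgD : g ≤ D := by
    have h1 : (1:ℕ) ∈ Finset.Icc 1 (n-1) := Finset.mem_Icc.2 ⟨le_rfl, by omega⟩
    have ha : g ≤ Y 1 - Y 0 := by
      rw [hgdef]; exact Finset.inf'_le (fun k => Y k - Y 0) h1
    have hb : Y 1 - Y 0 ≤ D := by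
      rw [hDdef]; exact Finset.le_sup' (fun k => Y k - Y 0) h1
    linarith
  have hD0 : (0:ℝ) ≤ D := le_trans hg.le hgD
  set M : ℝ := (n:ℝ) + (n:ℝ) * D / g with hMdef
  have hMn : (n:ℝ) ≤ M := by
    have : (0:ℝ) ≤ (n:ℝ) * D / g := div_nonneg (mul_nonneg (Nat.cast_nonneg n) hD0) hg.le
    rw [hMdef]; linarith
  have hM5 : ((n:ℝ) - 2) * D < g * (M - n + 1) := by
    have hgM : g * (M - n + 1) = (n:ℝ) * D + g := by
      rw [hMdef]; field_simp; ring
    rw [hgM]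
    nlinarith
  set X : ℕ → ℝ := fun k => if k = n - 1 then M else (k:ℝ) + 1 with hXdef
  have hX1 : ∀ k, k ≤ n - 2 → X k = (k:ℝ) + 1 := by
    intro k hk
    show (if k = n - 1 then M else (k:ℝ) + 1) = (k:ℝ) + 1
    rw [if_neg (by omega)]
  have hX2 : X (n-1) = M := by
    show (if n - 1 = n - 1 then M else ((n-1:ℕ):ℝ) + 1) = M
    rw [if_pos rfl]
  have key := cycle_key n hn Y X g D M hg hgD hYg hYD hMn hM5 hX1 hX2
  -- canonical edge classification
  have hcan : ∀ u v : Fin n, (v - u).val = 1 →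
      (((v - m).val = (u - m).val + 1 ∧ (v - m).val ≤ n - 1) ∨
        ((u - m).val = n - 1 ∧ (v - m).val = 0)) := by
    intro u v h
    have e : v - m = (v - u) + (u - m) := (sub_add_sub_cancel v u m).symm
    have hval : (v - m).val = ((v - u).val + (u - m).val) % n := by
      rw [e, Fin.val_add]
    rw [h] at hval
    have hu : (u - m).val < n := (u - m).isLt
    have hv : (v - m).val < n := (v - m).isLt
    rcases Nat.lt_or_ge ((u - m).val + 1) n with hlt | hge
    · left
      have : (v - m).val = (u - m).val + 1 := by
        rw [hval, Nat.add_comm, Nat.mod_eq_of_lt hlt]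
      exact ⟨this, by omega⟩
    · right
      have he : 1 + (u - m).val = n := by omega
      have : (v - m).val = 0 := by rw [hval, he, Nat.mod_self]
      exact ⟨by omega, this⟩
  have hjinj : ∀ u v : Fin n, (u - m).val = (v - m).val → u = v := by
    intro u v h
    have h2 : u - m = v - m := Fin.ext h
    have := congrArg (· + m) h2
    simpa [sub_add_cancel] using this
  refine ⟨fun v => X ((v - m).val), ?_, ?_⟩
  · intro i j hij
    exact hy (congrArg Prod.snd hij)
  · intro u v w t hadj1 hadj2 hsets
    have hpt : ∀ v : Fin n, ((X ((v - m).val), y v) : ℝ × ℝ) = (X ((v - m).val), Y ((v - m).val)) :=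
      fun v => Prod.ext rfl (hYv v).symm
    show segment ℝ (X ((u - m).val), y u) (X ((v - m).val), y v) ∩
        segment ℝ (X ((w - m).val), y w) (X ((t - m).val), y t) ⊆
      ({(X ((u - m).val), y u), (X ((v - m).val), y v)} : Set (ℝ × ℝ)) ∩
        {(X ((w - m).val), y w), (X ((t - m).val), y t)}
    rw [hpt u, hpt v, hpt w, hpt t]
    have pairext : ∀ (p q r s : Fin n), p = r → q = s → ({p, q} : Set (Fin n)) = {r, s} := by
      rintro p q r s rfl rfl; rfl
    rcases SimpleGraph.cycleGraph_adj'.1 hadj1 with h1 | h1 <;>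
      rcases SimpleGraph.cycleGraph_adj'.1 hadj2 with h2 | h2
    · -- canonical (v,u) and (t,w)
      have k1 := key ((v-m).val) ((u-m).val) ((t-m).val) ((w-m).val)
        (hcan v u h1) (hcan t w h2)
        (by rintro ⟨e1, e2⟩
            exact hsets ((pairext u v w t (hjinj u w e2) (hjinj v t e1)).trans rfl))
      intro z hz
      obtain ⟨hz1, hz2⟩ := hz
      rw [segment_symm] at hz1; rw [segment_symm] at hz2
      have hk := k1 ⟨hz1, hz2⟩
      refine ⟨?_, ?_⟩
      · rw [Set.pair_comm]; exact hk.1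
      · rw [Set.pair_comm]; exact hk.2
    · -- canonical (v,u) and (w,t)
      have k1 := key ((v-m).val) ((u-m).val) ((w-m).val) ((t-m).val)
        (hcan v u h1) (hcan w t h2)
        (by rintro ⟨e1, e2⟩
            exact hsets ((pairext u v t w (hjinj u t e2) (hjinj v w e1)).trans
              (Set.pair_comm t w)))
      intro z hz
      obtain ⟨hz1, hz2⟩ := hz
      rw [segment_symm] at hz1
      have hk := k1 ⟨hz1, hz2⟩
      refine ⟨?_, hk.2⟩
      rw [Set.pair_comm]; exact hk.1
    · -- canonical (u,v) and (t,w)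
      have k1 := key ((u-m).val) ((v-m).val) ((t-m).val) ((w-m).val)
        (hcan u v h1) (hcan t w h2)
        (by rintro ⟨e1, e2⟩
            exact hsets ((pairext u v t w (hjinj u t e1) (hjinj v w e2)).trans
              (Set.pair_comm t w)))
      intro z hz
      obtain ⟨hz1, hz2⟩ := hz
      rw [segment_symm] at hz2
      have hk := k1 ⟨hz1, hz2⟩
      refine ⟨hk.1, ?_⟩
      rw [Set.pair_comm]; exact hk.2
    · -- canonical (u,v) and (w,t)
      exact key ((u-m).val) ((v-m).val) ((w-m).val) ((t-m).val)
        (hcan u v h1) (hcan w t h2)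
        (by rintro ⟨e1, e2⟩
            exact hsets (pairext u v w t (hjinj u w e1) (hjinj v t e2)))
end

section
/- If the edge set of a graph G decomposes into a planar graph H and d paths P₁, …, P_d (as subgraphs on the same vertex set), then pdim(G) ≤ d + 2. -/
lemma seg_snd_mem {A B z : ℝ × ℝ} (hz : z ∈ segment ℝ A B) :
    z.2 ∈ segment ℝ A.2 B.2 := by
  obtain ⟨a, b, ha, hb, hab, rfl⟩ := hz
  exact ⟨a, b, ha, hb, hab, rfl⟩

lemma seg_snd_eq_right {A B z : ℝ × ℝ} (h : A.2 < B.2) (hz : z ∈ segment ℝ A B)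
    (h2 : z.2 = B.2) : z = B := by
  obtain ⟨a, b, ha, hb, hab, rfl⟩ := hz
  have h2' : a * A.2 + b * B.2 = B.2 := h2
  have h0 : a * (A.2 - B.2) = 0 := by linear_combination h2' - B.2 * hab
  have ha0 : a = 0 := by
    rcases mul_eq_zero.mp h0 with h' | h'
    · exact h'
    · exact absurd h' (by intro hh; linarith)
  have hb1 : b = 1 := by linarith
  subst ha0; subst hb1; simp

lemma seg_snd_eq_left {A B z : ℝ × ℝ} (h : A.2 < B.2) (hz : z ∈ segment ℝ A B)
    (h2 : z.2 = A.2) : z = A := by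
  obtain ⟨a, b, ha, hb, hab, rfl⟩ := hz
  have h2' : a * A.2 + b * B.2 = A.2 := h2
  have h0 : b * (B.2 - A.2) = 0 := by linear_combination h2' - A.2 * hab
  have hb0 : b = 0 := by
    rcases mul_eq_zero.mp h0 with h' | h'
    · exact h'
    · exact absurd h' (by intro hh; linarith)
  have ha1 : a = 1 := by linarith
  subst hb0; subst ha1; simp

lemma seg_cross {A B C D : ℝ × ℝ} {m n : ℕ} (hA : A.2 = m) (hB : B.2 = m + 1)
    (hC : C.2 = n) (hD : D.2 = n + 1) (hmn : m ≠ n) :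
    segment ℝ A B ∩ segment ℝ C D ⊆ ({A, B} : Set (ℝ × ℝ)) ∩ {C, D} := by
  rintro z ⟨hz1, hz2⟩
  have h1 := seg_snd_mem hz1
  have h2 := seg_snd_mem hz2
  rw [hA, hB, segment_eq_Icc (by linarith)] at h1
  rw [hC, hD, segment_eq_Icc (by linarith)] at h2
  obtain ⟨hl1, hr1⟩ := h1
  obtain ⟨hl2, hr2⟩ := h2
  rcases lt_or_gt_of_ne hmn with h | h
  · have hle : (m : ℝ) + 1 ≤ n := by exact_mod_cast Nat.succ_le_of_lt h
    have hzB : z = B := seg_snd_eq_right (by rw [hA, hB]; linarith) hz1 (by rw [hB]; linarith)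
    have hzC : z = C := seg_snd_eq_left (by rw [hC, hD]; linarith) hz2 (by rw [hC]; linarith)
    exact ⟨by rw [hzB]; right; rfl, by rw [hzC]; left; rfl⟩
  · have hle : (n : ℝ) + 1 ≤ m := by exact_mod_cast Nat.succ_le_of_lt h
    have hzA : z = A := seg_snd_eq_left (by rw [hA, hB]; linarith) hz1 (by rw [hA]; linarith)
    have hzD : z = D := seg_snd_eq_right (by rw [hC, hD]; linarith) hz2 (by rw [hD]; linarith)
    exact ⟨by rw [hzA]; left; rfl, by rw [hzD]; right; rfl⟩

lemma gen_bound (t u c : ℝ) (hc0 : 0 ≤ c) (hc1 : c ≤ 1) :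
    |Real.arctan t + c * Real.arctan u| < 4 := by
  have h1 := Real.arctan_lt_pi_div_two t
  have h2 := Real.neg_pi_div_two_lt_arctan t
  have h3 := Real.arctan_lt_pi_div_two u
  have h4 := Real.neg_pi_div_two_lt_arctan u
  have h5 := Real.pi_lt_d2
  have h6 := Real.pi_pos
  have hu1 : c * Real.arctan u ≤ Real.pi / 2 := by nlinarith
  have hu2 : -(Real.pi / 2) ≤ c * Real.arctan u := by nlinarith
  rw [abs_lt]
  constructor <;> nlinarith

lemma path_cross {k : ℕ} (F : Fin k → ℝ × ℝ)
    (hF : ∀ a : Fin k, (F a).2 = (a : ℕ) + 4)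
    {a b a' b' : Fin k}
    (hab : (a : ℕ) + 1 = (b : ℕ) ∨ (b : ℕ) + 1 = (a : ℕ))
    (hab' : (a' : ℕ) + 1 = (b' : ℕ) ∨ (b' : ℕ) + 1 = (a' : ℕ))
    (hne : ¬((a = a' ∧ b = b') ∨ (a = b' ∧ b = a'))) :
    segment ℝ (F a) (F b) ∩ segment ℝ (F a') (F b') ⊆
      ({F a, F b} : Set (ℝ × ℝ)) ∩ {F a', F b'} := by
  have key : ∀ x : Fin k, (F x).2 = ((x : ℕ) + 4 : ℕ) := by
    intro x; rw [hF]; push_cast; ring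
  have key' : ∀ x y : Fin k, (x : ℕ) + 1 = (y : ℕ) → (F y).2 = ((x : ℕ) + 4 : ℕ) + 1 := by
    intro x y hxy; rw [hF, ← hxy]; push_cast; ring
  rcases hab with h1 | h1 <;> rcases hab' with h2 | h2
  · refine seg_cross (m := (a : ℕ) + 4) (n := (a' : ℕ) + 4) (key a)
      (key' a b h1) (key a') (key' a' b' h2) ?_
    intro hc
    exact hne (Or.inl ⟨Fin.ext (by omega), Fin.ext (by omega)⟩)
  · rw [segment_symm ℝ (F a') (F b'), Set.pair_comm (F a') (F b')]
    refine seg_cross (m := (a : ℕ) + 4) (n := (b' : ℕ) + 4) (key a)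
      (key' a b h1) (key b') (key' b' a' h2) ?_
    intro hc
    exact hne (Or.inr ⟨Fin.ext (by omega), Fin.ext (by omega)⟩)
  · rw [segment_symm ℝ (F a) (F b), Set.pair_comm (F a) (F b)]
    refine seg_cross (m := (b : ℕ) + 4) (n := (a' : ℕ) + 4) (key b)
      (key' b a h1) (key a') (key' a' b' h2) ?_
    intro hc
    exact hne (Or.inr ⟨Fin.ext (by omega), Fin.ext (by omega)⟩)
  · rw [segment_symm ℝ (F a) (F b), Set.pair_comm (F a) (F b),
      segment_symm ℝ (F a') (F b'), Set.pair_comm (F a') (F b')]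
    refine seg_cross (m := (b : ℕ) + 4) (n := (b' : ℕ) + 4) (key b)
      (key' b a h1) (key b') (key' b' a' h2) ?_
    intro hc
    exact hne (Or.inl ⟨Fin.ext (by omega), Fin.ext (by omega)⟩)


/-- If `G` is the edge-union of a planar graph `H` and `d` paths,
then `pdim G ≤ d + 2`. -/
theorem statement14 {V : Type*} (G H : SimpleGraph V) (d : ℕ)
    (P : Fin d → SimpleGraph V)
    (hcov : G = H ⊔ ⨆ i, P i)
    (hH : ∃ p : V → ℝ × ℝ, CrossingFree H p)
    (hP : ∀ i, IsPathSubgraph (P i)) :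
    pdim G ≤ d + 2 := by
  classical
  obtain ⟨p, hpinj, hpcf⟩ := hH
  choose k w hw hPspec using hP
  set x : V → ℝ := fun v => (p v).1 with hxdef
  set y : V → ℝ := fun v => (p v).2 with hydef
  have hxy : ∀ v v', x v = x v' → y v = y v' → v = v' := fun v v' h1 h2 =>
    hpinj (Prod.ext h1 h2)
  set c : Fin d → ℝ := fun i => ((i : ℕ) + 1) / (d + 1) with hcdef
  have hc0 : ∀ i, 0 ≤ c i := fun i => by positivity
  have hc1 : ∀ i, c i ≤ 1 := by
    intro i
    rw [hcdef, div_le_one (by positivity)]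
    have := i.isLt
    push_cast
    linarith [(show ((i : ℕ) : ℝ) ≤ d from by exact_mod_cast Nat.le_of_lt i.isLt)]
  have hcinj : ∀ i j : Fin d, c i = c j → i = j := by
    intro i j h
    rw [hcdef] at h
    have hd : ((d:ℝ)+1) ≠ 0 := by positivity
    have h2 := congrArg (fun t : ℝ => t * ((d:ℝ)+1)) h
    simp only [div_mul_cancel₀ _ hd] at h2
    exact Fin.ext (by exact_mod_cast (by linarith : ((i : ℕ) : ℝ) = (j : ℕ)))
  set z : Fin d → V → ℝ := fun i v =>
    if h : ∃ a, w i a = v then ((h.choose : ℕ) : ℝ) + 4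
    else Real.arctan (x v) + c i * Real.arctan (y v) with hzdef
  have hzw : ∀ i a, z i (w i a) = (a : ℕ) + 4 := by
    intro i a
    have h : ∃ a', w i a' = w i a := ⟨a, rfl⟩
    have hch : h.choose = a := hw i h.choose_spec
    rw [hzdef]
    simp only [dif_pos h, hch]
  have hzgen : ∀ i v, (¬∃ a, w i a = v) →
      z i v = Real.arctan (x v) + c i * Real.arctan (y v) := by
    intro i v h; rw [hzdef]; simp only [dif_neg h]
  -- dichotomy on z-values
  have hz_eq : ∀ i v v', z i v = z i v' →
      v = v' ∨
      ((¬∃ a, w i a = v) ∧ (¬∃ a, w i a = v') ∧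
        Real.arctan (x v) + c i * Real.arctan (y v)
          = Real.arctan (x v') + c i * Real.arctan (y v')) := by
    intro i v v' h
    by_cases h1 : ∃ a, w i a = v <;> by_cases h2 : ∃ a, w i a = v'
    · obtain ⟨a, rfl⟩ := h1
      obtain ⟨b, rfl⟩ := h2
      rw [hzw, hzw] at h
      have hab : (a : ℕ) = (b : ℕ) := by exact_mod_cast (by linarith : ((a:ℕ):ℝ) = (b:ℕ))
      exact Or.inl (congrArg (w i) (Fin.ext hab))
    · exfalso
      obtain ⟨a, rfl⟩ := h1
      rw [hzw, hzgen i v' h2] at h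
      have hb := gen_bound (x v') (y v') (c i) (hc0 i) (hc1 i)
      rw [abs_lt] at hb
      have : (0:ℝ) ≤ (a:ℕ) := by positivity
      linarith
    · exfalso
      obtain ⟨a, rfl⟩ := h2
      rw [hzw, hzgen i v h1] at h
      have hb := gen_bound (x v) (y v) (c i) (hc0 i) (hc1 i)
      rw [abs_lt] at hb
      have : (0:ℝ) ≤ (a:ℕ) := by positivity
      linarith
    · rw [hzgen i v h1, hzgen i v' h2] at h
      exact Or.inr ⟨h1, h2, h⟩
  have harctan := Real.arctan_injective
  have hinjX : ∀ i v v', x v = x v' → z i v = z i v' → v = v' := by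
    intro i v v' hx h
    rcases hz_eq i v v' h with h' | ⟨_, _, h'⟩
    · exact h'
    · rw [hx] at h'
      have hcy : c i * Real.arctan (y v) = c i * Real.arctan (y v') := by linarith
      have hci : c i ≠ 0 := by have := hc0 i; rw [hcdef]; positivity
      have := mul_left_cancel₀ hci hcy
      exact hxy v v' hx (harctan this)
  have hinjY : ∀ i v v', y v = y v' → z i v = z i v' → v = v' := by
    intro i v v' hy h
    rcases hz_eq i v v' h with h' | ⟨_, _, h'⟩
    · exact h'
    · rw [hy] at h'
      have : Real.arctan (x v) = Real.arctan (x v') := by linarith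
      exact hxy v v' (harctan this) hy
  have hinjZZ : ∀ i j : Fin d, i ≠ j → ∀ v v', z i v = z i v' → z j v = z j v' → v = v' := by
    intro i j hij v v' hi hj
    rcases hz_eq i v v' hi with h' | ⟨_, _, h1⟩
    · exact h'
    rcases hz_eq j v v' hj with h' | ⟨_, _, h2⟩
    · exact h'
    have hcij : c i ≠ c j := fun h => hij (hcinj i j h)
    have hy' : Real.arctan (y v) = Real.arctan (y v') := by
      have : (c i - c j) * Real.arctan (y v) = (c i - c j) * Real.arctan (y v') := by
        linear_combination h1 - h2
      exact mul_left_cancel₀ (sub_ne_zero.mpr hcij) this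
    have hx' : Real.arctan (x v) = Real.arctan (x v') := by
      rw [hy'] at h1; linarith
    exact hxy v v' (harctan hx') (harctan hy')
  -- the embedding
  set ρ : V → Fin (d + 2) → ℝ := fun v i =>
    if h0 : (i : ℕ) = 0 then x v
    else if h1 : (i : ℕ) = 1 then y v
    else z ⟨(i : ℕ) - 2, by have := i.isLt; omega⟩ v with hρdef
  have hρ0 : ∀ v (i : Fin (d+2)), (i : ℕ) = 0 → ρ v i = x v := by
    intro v i h; rw [hρdef]; simp only [dif_pos h]
  have hρ1 : ∀ v (i : Fin (d+2)), (i : ℕ) = 1 → ρ v i = y v := by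
    intro v i h
    rw [hρdef]
    simp only [dif_neg (by omega : ¬(i : ℕ) = 0), dif_pos h]
  have hρ2 : ∀ v (i : Fin (d+2)) (h : 2 ≤ (i : ℕ)),
      ρ v i = z ⟨(i : ℕ) - 2, by have := i.isLt; omega⟩ v := by
    intro v i h
    rw [hρdef]
    simp only [dif_neg (by omega : ¬(i : ℕ) = 0), dif_neg (by omega : ¬(i : ℕ) = 1)]
  -- the edge decomposition
  set E : Fin (d+2) → Fin (d+2) → SimpleGraph V := fun i j =>
    if (i : ℕ) = 0 ∧ (j : ℕ) = 1 then H
    else if h : (i : ℕ) = 1 ∧ 2 ≤ (j : ℕ) then P ⟨(j : ℕ) - 2, by have := j.isLt; omega⟩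
    else ⊥ with hEdef
  have hE01 : ∀ (i j : Fin (d+2)), (i : ℕ) = 0 → (j : ℕ) = 1 → E i j = H := by
    intro i j hi hj; rw [hEdef]
    exact if_pos ⟨hi, hj⟩
  have hE1j : ∀ (i j : Fin (d+2)) (hi : (i : ℕ) = 1) (hj : 2 ≤ (j : ℕ)),
      E i j = P ⟨(j : ℕ) - 2, by have := j.isLt; omega⟩ := by
    intro i j hi hj
    simp only [hEdef]
    rw [if_neg (by omega : ¬((i:ℕ) = 0 ∧ (j:ℕ) = 1))]
    exact dif_pos ⟨hi, hj⟩
  have hEbot : ∀ (i j : Fin (d+2)), ¬((i : ℕ) = 0 ∧ (j : ℕ) = 1) →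
      ¬((i : ℕ) = 1 ∧ 2 ≤ (j : ℕ)) → E i j = ⊥ := by
    intro i j h1 h2
    simp only [hEdef]
    rw [if_neg h1]
    exact dif_neg h2
  -- injectivity of ρ
  have hρinj : Function.Injective ρ := by
    intro v v' h
    have h0 : ρ v ⟨0, by omega⟩ = ρ v' ⟨0, by omega⟩ := by rw [h]
    have h1 : ρ v ⟨1, by omega⟩ = ρ v' ⟨1, by omega⟩ := by rw [h]
    rw [hρ0 v _ rfl, hρ0 v' _ rfl] at h0
    rw [hρ1 v _ rfl, hρ1 v' _ rfl] at h1
    exact hxy v v' h0 h1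
  -- decomposition identity
  have hsup : G = ⨆ (i : Fin (d+2)) (j : Fin (d+2)) (_ : i < j), E i j := by
    rw [hcov]
    apply le_antisymm
    · apply sup_le
      · have := hE01 ⟨0, by omega⟩ ⟨1, by omega⟩ rfl rfl
        rw [← this]
        exact le_iSup_of_le ⟨0, by omega⟩ (le_iSup_of_le ⟨1, by omega⟩
          (le_iSup_of_le (by simp [Fin.lt_def]) le_rfl))
      · apply iSup_le
        intro i
        have hj : 2 ≤ (((⟨(i : ℕ) + 2, by have := i.isLt; omega⟩ : Fin (d+2))) : ℕ) := by simp
        have := hE1j ⟨1, by omega⟩ ⟨(i : ℕ) + 2, by have := i.isLt; omega⟩ rfl hj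
        have heq : P (⟨((⟨(i : ℕ) + 2, by have := i.isLt; omega⟩ : Fin (d+2)) : ℕ) - 2,
            by have := i.isLt; simp⟩ : Fin d) = P i := by
          congr 1 <;> exact Fin.ext (by simp)
        rw [heq] at this
        rw [← this]
        exact le_iSup_of_le ⟨1, by omega⟩
          (le_iSup_of_le ⟨(i : ℕ) + 2, by have := i.isLt; omega⟩
            (le_iSup_of_le (by simp [Fin.lt_def]) le_rfl))
    · apply iSup_le; intro i; apply iSup_le; intro j; apply iSup_le; intro hij
      rw [hEdef]
      dsimp only
      split_ifs with h1 h2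
      · exact le_sup_left
      · exact le_sup_of_le_right (le_iSup _ _)
      · exact bot_le
  -- crossing-freeness in every coordinate plane
  have hcf : ∀ i j : Fin (d+2), i < j → CrossingFree (E i j) (fun v => (ρ v i, ρ v j)) := by
    intro i j hij
    have hijn : (i : ℕ) < (j : ℕ) := hij
    by_cases hi0 : (i : ℕ) = 0
    · by_cases hj1 : (j : ℕ) = 1
      · rw [hE01 i j hi0 hj1]
        have hmap : (fun v => (ρ v i, ρ v j)) = p := by
          funext v
          rw [hρ0 v i hi0, hρ1 v j hj1]
        rw [hmap]
        exact ⟨hpinj, hpcf⟩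
      · have hj2 : 2 ≤ (j : ℕ) := by omega
        rw [hEbot i j (by omega) (by omega)]
        constructor
        · intro v v' h
          rw [Prod.mk.injEq] at h
          obtain ⟨h1, h2⟩ := h
          rw [hρ0 v i hi0, hρ0 v' i hi0] at h1
          rw [hρ2 v j hj2, hρ2 v' j hj2] at h2
          exact hinjX _ v v' h1 h2
        · intro u v u' v' h
          exact absurd h (by simp)
    · by_cases hi1 : (i : ℕ) = 1
      · have hj2 : 2 ≤ (j : ℕ) := by omega
        set i' : Fin d := ⟨(j : ℕ) - 2, by have := j.isLt; omega⟩ with hi'def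
        rw [hE1j i j hi1 hj2]
        have hmap : (fun v => (ρ v i, ρ v j)) = fun v => (y v, z i' v) := by
          funext v
          rw [hρ1 v i hi1, hρ2 v j hj2]
        rw [hmap]
        constructor
        · intro v v' h
          rw [Prod.mk.injEq] at h
          exact hinjY i' v v' h.1 h.2
        · intro u v u' v' huv hu'v' hne
          rw [hPspec i'] at huv hu'v'
          obtain ⟨a, b, rfl, rfl, hab⟩ := huv
          obtain ⟨a', b', rfl, rfl, hab'⟩ := hu'v'
          have hF : ∀ x' : Fin (k i'), ((fun v => (y v, z i' v)) (w i' x')).2 = (x' : ℕ) + 4 := by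
            intro x'; exact hzw i' x'
          refine path_cross (fun x' => (y (w i' x'), z i' (w i' x'))) hF hab hab' ?_
          intro hc
          apply hne
          rcases hc with ⟨rfl, rfl⟩ | ⟨rfl, rfl⟩
          · rfl
          · exact Set.pair_comm _ _
      · have hi2 : 2 ≤ (i : ℕ) := by omega
        have hj2 : 2 ≤ (j : ℕ) := by omega
        rw [hEbot i j (by omega) (by omega)]
        constructor
        · intro v v' h
          rw [Prod.mk.injEq] at h
          obtain ⟨h1, h2⟩ := h
          rw [hρ2 v i hi2, hρ2 v' i hi2] at h1
          rw [hρ2 v j hj2, hρ2 v' j hj2] at h2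
          refine hinjZZ _ _ ?_ v v' h1 h2
          intro hcontra
          have := congrArg Fin.val hcontra
          simp at this
          omega
        · intro u v u' v' h
          exact absurd h (by simp)
  exact Nat.sInf_le ⟨ρ, E, hρinj, hsup, hcf⟩
end
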